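/- Fix δ ∈ (0,1) and assume the family F = {L_w : ‖w‖₂ ≤ 1} satisfies the uniform convergence assumption with constants C1, C2. Let r̂ = 2^ĵ, where ĵ is the least integer j ≥ 0 such that either 2^{j+1} > T or ‖𝔔_T^{2^j} − 𝔔_T^{2^{j+1}}‖_F > 4·S(2^j, δ). Suppose ŵ attains the minimum of 𝔔_T^{r̂}(L_w) over {w : ‖w‖₂ ≤ 1} and w* attains the minimum of P_T(L_w) over {w : ‖w‖₂ ≤ 1}. Then with probability at least 1 − δ, P_T(L_ŵ) − P_T(L_{w*}) ≤ 44 · min_{1 ≤ r ≤ T} ( 21·S(r, δ) + max_{0 ≤ t ≤ r−1} ‖P_T − P_{T−t}‖_F ). -/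

import Mathlib

open MeasureTheory ProbabilityTheory
open scoped RealInnerProductSpace

/-- The squared loss `L_w(x, y) = (y − ⟨x, w⟩)²` of the linear predictor `w`. -/
noncomputable def sqLoss {d : ℕ} (w : EuclideanSpace ℝ (Fin d))
    (z : EuclideanSpace ℝ (Fin d) × ℝ) : ℝ :=
  (z.2 - ⟪z.1, w⟫) ^ 2

/-- The family `F = {L_w : ‖w‖ ≤ 1}` indexed by the unit ball of weights. -/
noncomputable def FR (d : ℕ) :
    {w : EuclideanSpace ℝ (Fin d) // ‖w‖ ≤ 1} →
      (EuclideanSpace ℝ (Fin d) × ℝ) → ℝ :=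
  fun w => sqLoss w.1

/-- The discrepancy `‖P − Q‖_F`. -/
noncomputable def dF {ι Z : Type*} [MeasurableSpace Z] (F : ι → Z → ℝ)
    (P Q : Measure Z) : ℝ :=
  ⨆ n, |(∫ z, F n z ∂P) - ∫ z, F n z ∂Q|

/-- The average distribution `P_T^r = (1/r)·Σ_{t=T−r+1}^T P_t`. -/
noncomputable def avgMeas {Z : Type*} [MeasurableSpace Z]
    (P : ℕ → Measure Z) (T r : ℕ) : Measure Z :=
  (r : ENNReal)⁻¹ • ∑ t ∈ Finset.Icc (T - r + 1) T, P t

/-- Empirical average `(1/r)·Σ_{t=T−r+1}^T f(Z_t(ω))`. -/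
noncomputable def empAvg {Z Ω : Type*} (Zs : ℕ → Ω → Z) (T r : ℕ)
    (f : Z → ℝ) (ω : Ω) : ℝ :=
  (r : ℝ)⁻¹ * ∑ t ∈ Finset.Icc (T - r + 1) T, f (Zs t ω)

/-- `‖P − 𝔔_T^r(ω)‖_F`. -/
noncomputable def dPE {ι Z Ω : Type*} [MeasurableSpace Z] (F : ι → Z → ℝ)
    (P : Measure Z) (Zs : ℕ → Ω → Z) (T r : ℕ) (ω : Ω) : ℝ :=
  ⨆ n, |(∫ z, F n z ∂P) - empAvg Zs T r (F n) ω|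

/-- `‖𝔔_T^r(ω) − 𝔔_T^s(ω)‖_F`. -/
noncomputable def dEE {ι Z Ω : Type*} (F : ι → Z → ℝ) (Zs : ℕ → Ω → Z)
    (T r s : ℕ) (ω : Ω) : ℝ :=
  ⨆ n, |empAvg Zs T r (F n) ω - empAvg Zs T s (F n) ω|

/-- `S(r, δ)`. -/
noncomputable def Sfun (C1 C2 r δ : ℝ) : ℝ :=
  (C1 + C2 * Real.sqrt (2 * Real.log (Real.pi ^ 2 / (6 * δ)))) / Real.sqrt r
    + C2 * Real.sqrt (2 * Real.log (Real.logb 2 r + 10) / r)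

/-- `max_{0 ≤ t ≤ r−1} ‖P_T − P_{T−t}‖_F`. -/
noncomputable def maxDrift {ι Z : Type*} [MeasurableSpace Z] (F : ι → Z → ℝ)
    (P : ℕ → Measure Z) (T r : ℕ) : ℝ :=
  ⨆ t : Fin r, dF F (P T) (P (T - (t : ℕ)))

/-- The stopping condition of the adaptive algorithm at step `j`. -/
def stopCond {ι Z Ω : Type*} (F : ι → Z → ℝ) (Zs : ℕ → Ω → Z)
    (T : ℕ) (C1 C2 δ : ℝ) (j : ℕ) (ω : Ω) : Prop :=
  2 ^ (j + 1) > T ∨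
    dEE F Zs T (2 ^ j) (2 ^ (j + 1)) ω > 4 * Sfun C1 C2 (2 ^ j : ℕ) δ

namespace St11

variable {d : ℕ}

abbrev W (d : ℕ) := {w : EuclideanSpace ℝ (Fin d) // ‖w‖ ≤ 1}

/-- the good support set -/
def K (d : ℕ) : Set (EuclideanSpace ℝ (Fin d) × ℝ) := {z | ‖z.1‖ ≤ 1 ∧ |z.2| ≤ 1}

instance : Nonempty (W d) := ⟨⟨0, by simp⟩⟩

instance : CompactSpace (W d) := by
  have : IsCompact {w : EuclideanSpace ℝ (Fin d) | ‖w‖ ≤ 1} := by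
    have h : {w : EuclideanSpace ℝ (Fin d) | ‖w‖ ≤ 1} = Metric.closedBall 0 1 := by
      ext w; simp [Metric.mem_closedBall, dist_zero_right]
    rw [h]
    exact isCompact_closedBall 0 1
  exact isCompact_iff_compactSpace.mp this

lemma sqLoss_cont_z (w : EuclideanSpace ℝ (Fin d)) : Continuous (sqLoss w) := by
  have h : Continuous fun z : EuclideanSpace ℝ (Fin d) × ℝ => ⟪z.1, w⟫ :=
    continuous_fst.inner continuous_const
  exact (continuous_snd.sub h).pow 2

lemma sqLoss_cont_w (z : EuclideanSpace ℝ (Fin d) × ℝ) :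
    Continuous fun w : EuclideanSpace ℝ (Fin d) => sqLoss w z := by
  have h : Continuous fun w : EuclideanSpace ℝ (Fin d) => ⟪z.1, w⟫ :=
    continuous_const.inner continuous_id
  exact (continuous_const.sub h).pow 2

lemma abs_inner_le (x w : EuclideanSpace ℝ (Fin d)) : |⟪x, w⟫| ≤ ‖x‖ * ‖w‖ :=
  abs_real_inner_le_norm x w

lemma abs_sqLoss_le {w : EuclideanSpace ℝ (Fin d)} (hw : ‖w‖ ≤ 1)
    {z : EuclideanSpace ℝ (Fin d) × ℝ} (hz : z ∈ K d) : |sqLoss w z| ≤ 4 := by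
  obtain ⟨hz1, hz2⟩ := hz
  have h1 : |⟪z.1, w⟫| ≤ 1 := by
    have := abs_inner_le z.1 w
    nlinarith [norm_nonneg z.1, norm_nonneg w]
  have h2 : |z.2 - ⟪z.1, w⟫| ≤ 2 := by
    calc |z.2 - ⟪z.1, w⟫| ≤ |z.2| + |⟪z.1, w⟫| := abs_sub _ _
    _ ≤ 2 := by linarith
  have : (z.2 - ⟪z.1, w⟫)^2 ≤ 4 := by nlinarith [abs_nonneg (z.2 - ⟪z.1, w⟫), sq_abs (z.2 - ⟪z.1, w⟫)]
  rw [sqLoss, abs_of_nonneg (sq_nonneg _)]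
  exact this

lemma abs_sqLoss_sub_le {w w' : EuclideanSpace ℝ (Fin d)} (hw : ‖w‖ ≤ 1) (hw' : ‖w'‖ ≤ 1)
    {z : EuclideanSpace ℝ (Fin d) × ℝ} (hz : z ∈ K d) :
    |sqLoss w z - sqLoss w' z| ≤ 4 * ‖w - w'‖ := by
  obtain ⟨hz1, hz2⟩ := hz
  set a := ⟪z.1, w⟫ with ha
  set b := ⟪z.1, w'⟫ with hb
  have key : sqLoss w z - sqLoss w' z = (b - a) * (2 * z.2 - a - b) := by
    simp only [sqLoss, ← ha, ← hb]; ring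
  have h1 : |a| ≤ 1 := by
    have := abs_inner_le z.1 w; nlinarith [norm_nonneg z.1, norm_nonneg w]
  have h2 : |b| ≤ 1 := by
    have := abs_inner_le z.1 w'; nlinarith [norm_nonneg z.1, norm_nonneg w']
  have h3 : |b - a| ≤ ‖w - w'‖ := by
    have : b - a = ⟪z.1, w' - w⟫ := by rw [ha, hb, inner_sub_right]
    rw [this]
    calc |⟪z.1, w' - w⟫| ≤ ‖z.1‖ * ‖w' - w‖ := abs_inner_le _ _
    _ ≤ 1 * ‖w' - w‖ := by
        exact mul_le_mul_of_nonneg_right hz1 (norm_nonneg _)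
    _ = ‖w - w'‖ := by rw [one_mul, norm_sub_rev]
  have h4 : |2 * z.2 - a - b| ≤ 4 := by
    calc |2 * z.2 - a - b| ≤ |2 * z.2| + |a| + |b| := by
          refine (abs_sub _ _).trans ?_
          have := abs_sub (2 * z.2 - a) b
          gcongr
          exact (abs_sub _ _).trans (by linarith [le_refl (|2*z.2| + |a|)])
    _ ≤ 4 := by rw [abs_mul]; norm_num; linarith
  calc |sqLoss w z - sqLoss w' z| = |b - a| * |2 * z.2 - a - b| := by rw [key, abs_mul]
  _ ≤ ‖w - w'‖ * 4 := by
      exact mul_le_mul h3 h4 (abs_nonneg _) (norm_nonneg _)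
  _ = 4 * ‖w - w'‖ := by ring


section Integrals

variable {ν : Measure (EuclideanSpace ℝ (Fin d) × ℝ)} [IsProbabilityMeasure ν]

lemma ae_mem_K (hν : ν (K d)ᶜ = 0) : ∀ᵐ z ∂ν, z ∈ K d :=
  (MeasureTheory.ae_iff (p := fun z => z ∈ K d)).mpr hν

lemma integrable_sqLoss (hν : ν (K d)ᶜ = 0) (w : W d) :
    Integrable (sqLoss w.1) ν := by
  refine Integrable.mono' (integrable_const (4:ℝ)) ((sqLoss_cont_z w.1).aestronglyMeasurable) ?_
  filter_upwards [ae_mem_K hν] with z hz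
  simpa using abs_sqLoss_le w.2 hz

lemma abs_integral_sqLoss_le (hν : ν (K d)ᶜ = 0) (w : W d) :
    |∫ z, sqLoss w.1 z ∂ν| ≤ 4 := by
  have h := norm_integral_le_of_norm_le_const (μ := ν) (C := 4) (f := sqLoss w.1) ?_
  · simpa [measure_univ] using h
  · filter_upwards [ae_mem_K hν] with z hz
    simpa using abs_sqLoss_le w.2 hz

lemma abs_integral_sqLoss_sub_le (hν : ν (K d)ᶜ = 0) (w w' : W d) :
    |(∫ z, sqLoss w.1 z ∂ν) - ∫ z, sqLoss w'.1 z ∂ν| ≤ 4 * ‖w.1 - w'.1‖ := by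
  rw [← MeasureTheory.integral_sub (integrable_sqLoss hν w) (integrable_sqLoss hν w')]
  have h := norm_integral_le_of_norm_le_const (μ := ν) (C := 4 * ‖w.1 - w'.1‖)
    (f := fun z => sqLoss w.1 z - sqLoss w'.1 z) ?_
  · simpa [measure_univ] using h
  · filter_upwards [ae_mem_K hν] with z hz
    simpa using abs_sqLoss_sub_le w.2 w'.2 hz

/-- continuity of the population risk in the weight -/
lemma cont_integral_sqLoss (hν : ν (K d)ᶜ = 0) :
    Continuous fun w : W d => ∫ z, sqLoss w.1 z ∂ν := by
  apply (LipschitzWith.of_dist_le_mul (K := 4) ?_).continuous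
  intro w w'
  rw [Real.dist_eq, Subtype.dist_eq, dist_eq_norm]
  exact abs_integral_sqLoss_sub_le hν w w'

end Integrals

section AvgMeas

variable {P : ℕ → Measure (EuclideanSpace ℝ (Fin d) × ℝ)} {T r : ℕ}

lemma Icc_subset_Icc_one (hr : 1 ≤ r) (hrT : r ≤ T) :
    Finset.Icc (T - r + 1) T ⊆ Finset.Icc 1 T := by
  apply Finset.Icc_subset_Icc _ le_rfl
  omega

lemma avgMeas_prob (hP : ∀ t, IsProbabilityMeasure (P t)) (hr : 1 ≤ r) (hrT : r ≤ T) :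
    IsProbabilityMeasure (avgMeas P T r) := by
  constructor
  rw [avgMeas]
  have hcard : (Finset.Icc (T - r + 1) T).card = r := by
    rw [Nat.card_Icc]; omega
  simp only [Measure.smul_apply, Measure.coe_finset_sum, Finset.sum_apply, smul_eq_mul]
  rw [Finset.sum_congr rfl (fun t _ => (hP t).measure_univ)]
  simp [hcard]
  rw [ENNReal.inv_mul_cancel]
  · exact Nat.cast_ne_zero.mpr (by omega)
  · exact ENNReal.natCast_ne_top r

lemma avgMeas_K_null (hPsupp : ∀ t ∈ Finset.Icc 1 T, P t (K d)ᶜ = 0)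
    (hr : 1 ≤ r) (hrT : r ≤ T) : (avgMeas P T r) (K d)ᶜ = 0 := by
  rw [avgMeas]
  simp only [Measure.smul_apply, Measure.coe_finset_sum, Finset.sum_apply, smul_eq_mul]
  rw [Finset.sum_congr rfl (fun t ht => hPsupp t (Icc_subset_Icc_one hr hrT ht))]
  simp

lemma integral_avgMeas (hPsupp : ∀ t ∈ Finset.Icc 1 T, P t (K d)ᶜ = 0)
    (hP : ∀ t, IsProbabilityMeasure (P t))
    (hr : 1 ≤ r) (hrT : r ≤ T) (w : W d) :
    ∫ z, sqLoss w.1 z ∂(avgMeas P T r)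
      = (r:ℝ)⁻¹ * ∑ t ∈ Finset.Icc (T - r + 1) T, ∫ z, sqLoss w.1 z ∂(P t) := by
  rw [avgMeas, MeasureTheory.integral_smul_measure, MeasureTheory.integral_finset_sum_measure]
  · simp [ENNReal.toReal_inv]
  · intro t ht
    have := hP t
    exact integrable_sqLoss (hPsupp t (Icc_subset_Icc_one hr hrT ht)) w

end AvgMeas


section SupRed

/-- On a nonempty compact space, the sup of a continuous function equals its sup
over a dense sequence. -/
lemma ciSup_eq_ciSup_dense {X : Type*} [MetricSpace X] [CompactSpace X] [Nonempty X]
    {g : X → ℝ} (hg : Continuous g) {u : ℕ → X} (hu : DenseRange u) :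
    (⨆ n, g n) = ⨆ k, g (u k) := by
  obtain ⟨x₀, -, hx₀⟩ := isCompact_univ.exists_isMaxOn (Set.univ_nonempty) hg.continuousOn
  have hbdd : BddAbove (Set.range g) :=
    ⟨g x₀, by rintro y ⟨x, rfl⟩; exact hx₀ (Set.mem_univ x)⟩
  have hbdd2 : BddAbove (Set.range fun k => g (u k)) :=
    hbdd.mono (Set.range_comp_subset_range u g)
  apply le_antisymm
  · apply ciSup_le
    intro x
    -- approximate x by the dense sequence
    obtain ⟨φ, hφ⟩ : ∃ φ : ℕ → ℕ, Filter.Tendsto (fun m => u (φ m)) Filter.atTop (nhds x) := by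
      have hx : x ∈ closure (Set.range u) := by rw [hu.closure_range]; trivial
      obtain ⟨s, hs, hlim⟩ := mem_closure_iff_seq_limit.mp hx
      choose φ hφ using hs
      refine ⟨φ, ?_⟩
      have : (fun m => u (φ m)) = s := by funext m; exact (hφ m)
      rw [this]; exact hlim
    have : Filter.Tendsto (fun m => g (u (φ m))) Filter.atTop (nhds (g x)) :=
      (hg.continuousAt.tendsto).comp hφ
    exact le_of_tendsto' this (fun m => le_ciSup hbdd2 (φ m))
  · exact ciSup_le fun k => le_ciSup hbdd (u k)

end SupRed

section Meas

variable {Ω : Type*} [MeasurableSpace Ω]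
variable {P : ℕ → Measure (EuclideanSpace ℝ (Fin d) × ℝ)} {T r : ℕ}

lemma measurable_empAvg {Zs : ℕ → Ω → EuclideanSpace ℝ (Fin d) × ℝ}
    (hZmeas : ∀ t, Measurable (Zs t)) (w : W d) :
    Measurable fun ω => empAvg Zs T r (FR d w) ω := by
  unfold empAvg
  apply Measurable.const_mul
  apply Finset.measurable_sum
  intro t _
  exact ((sqLoss_cont_z w.1).measurable).comp (hZmeas t)

lemma cont_empAvg {Zs : ℕ → Ω → EuclideanSpace ℝ (Fin d) × ℝ} (ω : Ω) :
    Continuous fun w : W d => empAvg Zs T r (FR d w) ω := by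
  unfold empAvg
  apply Continuous.mul continuous_const
  apply continuous_finset_sum
  intro t _
  exact (sqLoss_cont_w (Zs t ω)).comp continuous_subtype_val

lemma measurable_dPE {ν : Measure (EuclideanSpace ℝ (Fin d) × ℝ)} [IsProbabilityMeasure ν]
    (hν : ν (K d)ᶜ = 0)
    {Zs : ℕ → Ω → EuclideanSpace ℝ (Fin d) × ℝ} (hZmeas : ∀ t, Measurable (Zs t)) :
    Measurable fun ω => dPE (FR d) ν Zs T r ω := by
  obtain ⟨u, hu⟩ := TopologicalSpace.exists_dense_seq (W d)
  have hgc : ∀ ω : Ω, Continuous fun w : W d =>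
      |(∫ z, FR d w z ∂ν) - empAvg Zs T r (FR d w) ω| := by
    intro ω
    exact ((cont_integral_sqLoss hν).sub (cont_empAvg ω)).abs
  have key : (fun ω => dPE (FR d) ν Zs T r ω)
      = fun ω => ⨆ k, |(∫ z, FR d (u k) z ∂ν) - empAvg Zs T r (FR d (u k)) ω| := by
    funext ω
    exact ciSup_eq_ciSup_dense (hgc ω) hu
  rw [key]
  apply Measurable.iSup
  intro k
  exact (measurable_const.sub (measurable_empAvg hZmeas (u k))).abs

end Meas


section SfunFacts

open Real

/-- `Sfun` at `r = 2^j`, rewritten. -/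
noncomputable def SS (C1 C2 δ : ℝ) (j : ℕ) : ℝ :=
  (C1 + C2 * Real.sqrt (2 * Real.log (Real.pi ^ 2 / (6 * δ)))) * ((Real.sqrt 2)⁻¹) ^ j
    + C2 * Real.sqrt (2 * Real.log ((j : ℝ) + 10)) * ((Real.sqrt 2)⁻¹) ^ j

lemma one_lt_sqrt_two : (1:ℝ) < Real.sqrt 2 := by
  rw [show (1:ℝ) = Real.sqrt 1 by simp]
  exact Real.sqrt_lt_sqrt (by norm_num) (by norm_num)

lemma sqrt_two_pos : (0:ℝ) < Real.sqrt 2 := by positivity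

lemma q_nonneg : (0:ℝ) ≤ (Real.sqrt 2)⁻¹ := by positivity

lemma q_lt_one : (Real.sqrt 2)⁻¹ < 1 := by
  rw [inv_lt_one_iff₀]; right; exact one_lt_sqrt_two

lemma sqrt_pow_two (j : ℕ) : Real.sqrt ((2:ℝ)^j) = (Real.sqrt 2)^j := by
  rw [← Real.sqrt_sq (by positivity : (0:ℝ) ≤ (Real.sqrt 2)^j)]
  congr 1
  rw [← pow_mul, mul_comm, pow_mul, Real.sq_sqrt (by norm_num : (0:ℝ) ≤ 2)]

lemma log_ten_add_nonneg (j : ℕ) : 0 ≤ Real.log ((j:ℝ) + 10) :=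
  Real.log_nonneg (by linarith [Nat.cast_nonneg (α := ℝ) j])

lemma Sfun_pow_eq (C1 C2 δ : ℝ) (j : ℕ) :
    Sfun C1 C2 ((2^j : ℕ) : ℝ) δ = SS C1 C2 δ j := by
  unfold Sfun SS
  push_cast
  rw [show Real.logb 2 ((2:ℝ)^j) = (j:ℝ) by
    rw [Real.logb_pow, Real.logb_self_eq_one (by norm_num)]; ring]
  rw [Real.sqrt_div (by linarith [log_ten_add_nonneg j] : (0:ℝ) ≤ 2 * Real.log ((j:ℝ) + 10)),
    sqrt_pow_two, div_eq_mul_inv, div_eq_mul_inv, inv_pow, mul_assoc]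
  ring

lemma SS_nonneg (C1 C2 δ : ℝ) (hC1 : 0 ≤ C1) (hC2 : 0 ≤ C2) (j : ℕ) :
    0 ≤ SS C1 C2 δ j := by
  unfold SS
  have h1 := Real.sqrt_nonneg (2 * Real.log (Real.pi ^ 2 / (6 * δ)))
  have h2 := Real.sqrt_nonneg (2 * Real.log ((j:ℝ) + 10))
  have h3 : (0:ℝ) ≤ ((Real.sqrt 2)⁻¹)^j := by positivity
  have hA : (0:ℝ) ≤ C1 + C2 * Real.sqrt (2 * Real.log (Real.pi ^ 2 / (6 * δ))) := by
    nlinarith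
  have := mul_nonneg hA h3
  have := mul_nonneg (mul_nonneg hC2 h2) h3
  linarith

lemma Sfun_nonneg (C1 C2 δ : ℝ) (hC1 : 0 ≤ C1) (hC2 : 0 ≤ C2) (r : ℝ) :
    0 ≤ Sfun C1 C2 r δ := by
  unfold Sfun
  have h1 := Real.sqrt_nonneg (2 * Real.log (Real.pi ^ 2 / (6 * δ)))
  have h2 := Real.sqrt_nonneg (2 * Real.log (Real.logb 2 r + 10) / r)
  have h3 := Real.sqrt_nonneg r
  have hA : (0:ℝ) ≤ (C1 + C2 * Real.sqrt (2 * Real.log (Real.pi ^ 2 / (6 * δ)))) / Real.sqrt r :=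
    div_nonneg (by nlinarith) h3
  nlinarith

/-- key geometric comparison: `SS (a+k) ≤ (k+1) q^k SS a`. -/
lemma SS_le_geom (C1 C2 δ : ℝ) (hC1 : 0 ≤ C1) (hC2 : 0 ≤ C2) (a k : ℕ) :
    SS C1 C2 δ (a + k) ≤ ((k:ℝ) + 1) * ((Real.sqrt 2)⁻¹)^k * SS C1 C2 δ a := by
  have hq := q_nonneg
  have hlog : Real.log ((a:ℝ) + (k:ℝ) + 10) ≤ ((k:ℝ)+1) * Real.log ((a:ℝ) + 10) := by
    have hlp : ((k:ℝ)+1) * Real.log ((a:ℝ)+10) = Real.log (((a:ℝ)+10)^(k+1)) := by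
      rw [Real.log_pow]; push_cast; ring
    rw [hlp]
    apply Real.log_le_log (by positivity)
    have h1 : ((a:ℝ) + 10)^(k+1) ≥ ((a:ℝ)+10) * ((k:ℝ)+1) := by
      have hb : ((a:ℝ)+10)^k ≥ (k:ℝ)+1 := by
        have := one_add_mul_le_pow (a := (a:ℝ) + 9) (by linarith [Nat.cast_nonneg (α := ℝ) a]) k
        have h9 : (1:ℝ) + (k:ℝ) * ((a:ℝ)+9) ≥ (k:ℝ) + 1 := by nlinarith [Nat.cast_nonneg (α := ℝ) k]
        calc ((a:ℝ)+10)^k = (1 + ((a:ℝ)+9))^k := by ring_nf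
        _ ≥ 1 + (k:ℝ) * ((a:ℝ)+9) := this
        _ ≥ (k:ℝ) + 1 := h9
      calc ((a:ℝ) + 10)^(k+1) = ((a:ℝ)+10) * ((a:ℝ)+10)^k := by ring
      _ ≥ ((a:ℝ)+10) * ((k:ℝ)+1) := by nlinarith [Nat.cast_nonneg (α := ℝ) a]
    nlinarith [Nat.cast_nonneg (α := ℝ) a, Nat.cast_nonneg (α := ℝ) k]
  have hsq : Real.sqrt (2 * Real.log ((a:ℝ) + (k:ℝ) + 10))
      ≤ ((k:ℝ)+1) * Real.sqrt (2 * Real.log ((a:ℝ) + 10)) := by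
    calc Real.sqrt (2 * Real.log ((a:ℝ) + (k:ℝ) + 10))
        ≤ Real.sqrt (((k:ℝ)+1) * (2 * Real.log ((a:ℝ) + 10))) := by
          apply Real.sqrt_le_sqrt; nlinarith
    _ = Real.sqrt ((k:ℝ)+1) * Real.sqrt (2 * Real.log ((a:ℝ) + 10)) := by
          rw [← Real.sqrt_mul (by positivity)]
    _ ≤ ((k:ℝ)+1) * Real.sqrt (2 * Real.log ((a:ℝ) + 10)) := by
          apply mul_le_mul_of_nonneg_right _ (Real.sqrt_nonneg _)
          calc Real.sqrt ((k:ℝ)+1) ≤ Real.sqrt (((k:ℝ)+1)^2) :=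
                Real.sqrt_le_sqrt (by nlinarith [Nat.cast_nonneg (α := ℝ) k])
          _ = (k:ℝ)+1 := Real.sqrt_sq (by positivity)
  unfold SS
  push_cast
  have hqa : (0:ℝ) ≤ (Real.sqrt 2)⁻¹ ^ a := by positivity
  have hqk : (0:ℝ) ≤ (Real.sqrt 2)⁻¹ ^ k := by positivity
  have hpow : ((Real.sqrt 2)⁻¹ : ℝ) ^ (a + k) = (Real.sqrt 2)⁻¹ ^ a * (Real.sqrt 2)⁻¹ ^ k :=
    pow_add _ a k
  rw [hpow]
  have hB1 : (0:ℝ) ≤ Real.sqrt (2 * Real.log ((a:ℝ) + 10)) := Real.sqrt_nonneg _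
  have hB2 : (0:ℝ) ≤ Real.sqrt (2 * Real.log ((a:ℝ) + (k:ℝ) + 10)) := Real.sqrt_nonneg _
  have hA : (0:ℝ) ≤ C1 + C2 * Real.sqrt (2 * Real.log (Real.pi ^ 2 / (6 * δ))) := by
    have := Real.sqrt_nonneg (2 * Real.log (Real.pi ^ 2 / (6 * δ))); positivity
  have hk1 : (1:ℝ) ≤ (k:ℝ) + 1 := by linarith [Nat.cast_nonneg (α := ℝ) k]
  nlinarith [mul_le_mul_of_nonneg_right hsq (mul_nonneg hqa hqk),
    mul_nonneg hqa hqk,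
    mul_le_mul_of_nonneg_right hk1 (mul_nonneg (mul_nonneg hA hqa) hqk),
    mul_nonneg (mul_nonneg hC2 hB1) (mul_nonneg hqa hqk)]

end SfunFacts


/-- comparison of `Sfun` at `2^j` with `Sfun` at any `r ∈ [2^j, 2^(j+1)]`. -/
lemma Sfun_pow_le_two_Sfun (C1 C2 δ : ℝ) (hC1 : 0 ≤ C1) (hC2 : 0 ≤ C2) (j r : ℕ)
    (h1 : 2^j ≤ r) (h2 : r ≤ 2^(j+1)) :
    Sfun C1 C2 ((2^j : ℕ) : ℝ) δ ≤ 2 * Sfun C1 C2 (r : ℝ) δ := by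
  have hr1 : (1:ℝ) ≤ (r:ℝ) := by
    have : (1:ℕ) ≤ r := le_trans (Nat.one_le_two_pow) h1
    exact_mod_cast this
  have hrpos : (0:ℝ) < (r:ℝ) := by linarith
  have h2j : (0:ℝ) < (2:ℝ)^j := by positivity
  have h1' : (2:ℝ)^j ≤ (r:ℝ) := by exact_mod_cast (by exact_mod_cast h1 : ((2^j : ℕ):ℝ) ≤ r)
  have h2' : (r:ℝ) ≤ 2 * (2:ℝ)^j := by
    have : ((r:ℕ):ℝ) ≤ ((2^(j+1) : ℕ):ℝ) := by exact_mod_cast h2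
    push_cast at this
    rw [pow_succ] at this
    linarith [this]
  unfold Sfun
  push_cast
  rw [show Real.logb 2 ((2:ℝ)^j) = (j:ℝ) by
    rw [Real.logb_pow, Real.logb_self_eq_one (by norm_num)]; ring]
  have hA : (0:ℝ) ≤ C1 + C2 * Real.sqrt (2 * Real.log (Real.pi ^ 2 / (6 * δ))) := by
    have := Real.sqrt_nonneg (2 * Real.log (Real.pi ^ 2 / (6 * δ))); nlinarith
  have hlogb : (j:ℝ) ≤ Real.logb 2 (r:ℝ) := by
    rw [show (j:ℝ) = Real.logb 2 ((2:ℝ)^j) by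
      rw [Real.logb_pow, Real.logb_self_eq_one (by norm_num)]; ring]
    exact Real.logb_le_logb_of_le (by norm_num : (1:ℝ) < 2) h2j h1'
  have hlog : Real.log ((j:ℝ) + 10) ≤ Real.log (Real.logb 2 (r:ℝ) + 10) :=
    Real.log_le_log (by linarith [Nat.cast_nonneg (α := ℝ) j]) (by linarith)
  have hy0 : 0 ≤ Real.log (Real.logb 2 (r:ℝ) + 10) :=
    le_trans (log_ten_add_nonneg j) hlog
  have part1 : (C1 + C2 * Real.sqrt (2 * Real.log (Real.pi ^ 2 / (6 * δ)))) / Real.sqrt ((2:ℝ)^j)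
      ≤ 2 * ((C1 + C2 * Real.sqrt (2 * Real.log (Real.pi ^ 2 / (6 * δ)))) / Real.sqrt (r:ℝ)) := by
    rw [← mul_div_assoc, div_le_div_iff₀ (Real.sqrt_pos.mpr h2j) (Real.sqrt_pos.mpr hrpos)]
    have hs : Real.sqrt (r:ℝ) ≤ 2 * Real.sqrt ((2:ℝ)^j) := by
      calc Real.sqrt (r:ℝ) ≤ Real.sqrt (2 * (2:ℝ)^j) := Real.sqrt_le_sqrt h2'
      _ = Real.sqrt 2 * Real.sqrt ((2:ℝ)^j) := Real.sqrt_mul (by norm_num) _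
      _ ≤ 2 * Real.sqrt ((2:ℝ)^j) := by
          apply mul_le_mul_of_nonneg_right _ (Real.sqrt_nonneg _)
          nlinarith [one_lt_sqrt_two, sqrt_two_pos, Real.mul_self_sqrt (by norm_num : (0:ℝ) ≤ 2)]
    calc (C1 + C2 * Real.sqrt (2 * Real.log (Real.pi ^ 2 / (6 * δ)))) * Real.sqrt (r:ℝ)
        ≤ (C1 + C2 * Real.sqrt (2 * Real.log (Real.pi ^ 2 / (6 * δ)))) * (2 * Real.sqrt ((2:ℝ)^j)) :=
          mul_le_mul_of_nonneg_left hs hA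
    _ = 2 * (C1 + C2 * Real.sqrt (2 * Real.log (Real.pi ^ 2 / (6 * δ)))) * Real.sqrt ((2:ℝ)^j) := by
          ring
  have part2 : C2 * Real.sqrt (2 * Real.log ((j:ℝ) + 10) / (2:ℝ)^j)
      ≤ 2 * (C2 * Real.sqrt (2 * Real.log (Real.logb 2 (r:ℝ) + 10) / (r:ℝ))) := by
    have harg : 2 * Real.log ((j:ℝ) + 10) / (2:ℝ)^j
        ≤ 4 * (2 * Real.log (Real.logb 2 (r:ℝ) + 10) / (r:ℝ)) := by
      rw [← mul_div_assoc, div_le_div_iff₀ h2j hrpos]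
      have hja := log_ten_add_nonneg j
      nlinarith [mul_le_mul_of_nonneg_right hlog (le_of_lt hrpos),
        mul_le_mul_of_nonneg_left h2' (mul_nonneg (by norm_num : (0:ℝ) ≤ 2) hy0)]
    calc C2 * Real.sqrt (2 * Real.log ((j:ℝ) + 10) / (2:ℝ)^j)
        ≤ C2 * Real.sqrt (4 * (2 * Real.log (Real.logb 2 (r:ℝ) + 10) / (r:ℝ))) :=
          mul_le_mul_of_nonneg_left (Real.sqrt_le_sqrt harg) hC2
    _ = C2 * (2 * Real.sqrt (2 * Real.log (Real.logb 2 (r:ℝ) + 10) / (r:ℝ))) := by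
        rw [Real.sqrt_mul (by norm_num : (0:ℝ) ≤ 4),
          show Real.sqrt 4 = 2 by
            rw [show (4:ℝ) = 2^2 by norm_num, Real.sqrt_sq (by norm_num : (0:ℝ) ≤ 2)]]
    _ = 2 * (C2 * Real.sqrt (2 * Real.log (Real.logb 2 (r:ℝ) + 10) / (r:ℝ))) := by ring
  linarith [part1, part2]

/-- the geometric sum bound -/
lemma sum_geom_le (Kn : ℕ) :
    ∑ k ∈ Finset.range Kn, ((k:ℝ) + 1) * ((Real.sqrt 2)⁻¹)^k ≤ 12 := by
  set x : ℝ := (Real.sqrt 2)⁻¹ with hx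
  have h0 : (0:ℝ) ≤ x := q_nonneg
  have h1 : x < 1 := q_lt_one
  have hnorm : ‖x‖ < 1 := by rw [Real.norm_eq_abs, abs_of_nonneg h0]; exact h1
  have s1 : Summable (fun k : ℕ => x^k) := summable_geometric_of_lt_one h0 h1
  have s2 : Summable (fun k : ℕ => (k:ℝ) * x^k) := by
    have := summable_pow_mul_geometric_of_norm_lt_one (R := ℝ) 1 hnorm
    simpa using this
  have hsummable : Summable (fun k : ℕ => ((k:ℝ) + 1) * x^k) := by
    have := s2.add s1
    convert this using 2 with k
    ring
  have hle : ∑ k ∈ Finset.range Kn, ((k:ℝ) + 1) * x^k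
      ≤ ∑' k : ℕ, ((k:ℝ) + 1) * x^k := by
    apply Summable.sum_le_tsum _ (fun k _ => by positivity) hsummable
  refine hle.trans ?_
  have htsum : ∑' k : ℕ, ((k:ℝ) + 1) * x^k = x / (1-x)^2 + (1-x)⁻¹ := by
    rw [show (fun k : ℕ => ((k:ℝ) + 1) * x^k) = fun k : ℕ => (k:ℝ) * x^k + x^k by
      funext k; ring]
    rw [Summable.tsum_add s2 s1, tsum_geometric_of_lt_one h0 h1,
      tsum_coe_mul_geometric_of_norm_lt_one hnorm]
  rw [htsum]
  have hx1 : (0:ℝ) < 1 - x := by linarith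
  have heq : x / (1-x)^2 + (1-x)⁻¹ = ((1-x)^2)⁻¹ := by
    field_simp
    ring
  rw [heq, ← one_div, div_le_iff₀ (by positivity)]
  have hs2 : Real.sqrt 2 * Real.sqrt 2 = 2 := Real.mul_self_sqrt (by norm_num)
  have hsge : Real.sqrt 2 ≥ 1.41 := by nlinarith [sqrt_two_pos]
  have hx2 : x * Real.sqrt 2 = 1 := by
    rw [hx]; exact inv_mul_cancel₀ (ne_of_gt sqrt_two_pos)
  have hxle : x ≤ 100/141 := by nlinarith [h0]
  nlinarith [hxle, h0]


/-- our choice of per-scale failure probability -/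
noncomputable def dlt (δ : ℝ) (j : ℕ) : ℝ := 9 * δ / ((j:ℝ) + 10)^2

lemma dlt_pos {δ : ℝ} (hδ0 : 0 < δ) (j : ℕ) : 0 < dlt δ j := by
  unfold dlt
  have : (0:ℝ) < ((j:ℝ) + 10)^2 := by positivity
  positivity

lemma dlt_lt_one {δ : ℝ} (hδ0 : 0 < δ) (hδ1 : δ < 1) (j : ℕ) : dlt δ j < 1 := by
  unfold dlt
  rw [div_lt_one (by positivity)]
  nlinarith [Nat.cast_nonneg (α := ℝ) j]

lemma sum_dlt_le {δ : ℝ} (hδ0 : 0 < δ) (n : ℕ) :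
    ∑ j ∈ Finset.range n, dlt δ j ≤ δ := by
  have key : ∀ j : ℕ, dlt δ j ≤ 9*δ/((j:ℝ)+9) - 9*δ/((j:ℝ)+1+9) := by
    intro j
    have h9 : (0:ℝ) < (j:ℝ) + 9 := by positivity
    have h10 : (0:ℝ) < (j:ℝ) + 10 := by positivity
    rw [show (j:ℝ)+1+9 = (j:ℝ)+10 by ring, div_sub_div _ _ (ne_of_gt h9) (ne_of_gt h10)]
    unfold dlt
    rw [div_le_div_iff₀ (by positivity) (by positivity)]
    nlinarith [Nat.cast_nonneg (α := ℝ) j, mul_pos h9 h10]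
  calc ∑ j ∈ Finset.range n, dlt δ j
      ≤ ∑ j ∈ Finset.range n, (9*δ/((j:ℝ)+9) - 9*δ/((j:ℝ)+1+9)) :=
        Finset.sum_le_sum (fun j _ => key j)
  _ = 9*δ/((0:ℝ)+9) - 9*δ/((n:ℝ)+9) := by
      have := Finset.sum_range_sub' (f := fun j : ℕ => 9*δ/((j:ℝ)+9)) n
      simpa using this
  _ ≤ δ := by
      have h9 : (0:ℝ) < (n:ℝ) + 9 := by positivity
      have : 0 ≤ 9*δ/((n:ℝ)+9) := by positivity
      norm_num
      linarith
  
lemma log_pi_nonneg {δ : ℝ} (hδ0 : 0 < δ) (hδ1 : δ < 1) :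
    0 ≤ Real.log (Real.pi^2 / (6*δ)) := by
  apply Real.log_nonneg
  rw [le_div_iff₀ (by positivity)]
  nlinarith [Real.pi_gt_three]

/-- conversion of the uniform-convergence bound at confidence `dlt δ j` into `Sfun`. -/
lemma UC_bound_le_Sfun {C1 C2 δ : ℝ} (hC1 : 0 ≤ C1) (hC2 : 0 ≤ C2)
    (hδ0 : 0 < δ) (hδ1 : δ < 1) (j : ℕ) :
    C1 / Real.sqrt ((2^j : ℕ) : ℝ)
      + C2 * Real.sqrt (Real.log (1 / dlt δ j) / ((2^j : ℕ) : ℝ))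
      ≤ Sfun C1 C2 ((2^j : ℕ) : ℝ) δ := by
  have hj10 : (0:ℝ) < (j:ℝ) + 10 := by positivity
  have hd0 := dlt_pos hδ0 j
  have hd1 := dlt_lt_one hδ0 hδ1 j
  have hlog1 : 0 ≤ Real.log (1 / dlt δ j) := by
    apply Real.log_nonneg
    rw [le_div_iff₀ hd0]; linarith
  have hL := log_pi_nonneg hδ0 hδ1
  have hlogj := log_ten_add_nonneg j
  -- log (1/dlt δ j) ≤ 2 log(π²/(6δ)) + 2 log (j+10)
  have hkey : Real.log (1 / dlt δ j)
      ≤ 2 * Real.log (Real.pi^2 / (6*δ)) + 2 * Real.log ((j:ℝ) + 10) := by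
    have e1 : Real.log (1 / dlt δ j)
        = 2 * Real.log ((j:ℝ)+10) - Real.log 9 - Real.log δ := by
      unfold dlt
      rw [one_div, Real.log_inv, Real.log_div (by positivity) (by positivity),
        Real.log_mul (by norm_num) (ne_of_gt hδ0), Real.log_pow]
      push_cast
      ring
    have e2 : Real.log (Real.pi^2 / (6*δ))
        = Real.log (Real.pi^2) - Real.log 6 - Real.log δ := by
      rw [Real.log_div (by positivity) (by positivity),
        Real.log_mul (by norm_num) (ne_of_gt hδ0)]
      ring
    have h6pi : Real.log 6 ≤ Real.log (Real.pi^2) :=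
      Real.log_le_log (by norm_num) (by nlinarith [Real.pi_gt_three])
    have h9 : 0 ≤ Real.log 9 := Real.log_nonneg (by norm_num)
    have hlogδ : Real.log δ ≤ 0 := Real.log_nonpos (le_of_lt hδ0) (le_of_lt hδ1)
    rw [e1]
    rw [e2]
    linarith
  -- √(log(1/dlt)) ≤ √(2 log(π²/6δ)) + √(2 log(j+10))
  have hsplit : Real.sqrt (Real.log (1 / dlt δ j))
      ≤ Real.sqrt (2 * Real.log (Real.pi^2 / (6*δ)))
        + Real.sqrt (2 * Real.log ((j:ℝ) + 10)) := by
    have h1 : Real.sqrt (Real.log (1 / dlt δ j))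
        ≤ Real.sqrt (2 * Real.log (Real.pi^2 / (6*δ)) + 2 * Real.log ((j:ℝ) + 10)) :=
      Real.sqrt_le_sqrt hkey
    refine h1.trans ?_
    have ha := Real.sqrt_nonneg (2 * Real.log (Real.pi^2 / (6*δ)))
    have hb := Real.sqrt_nonneg (2 * Real.log ((j:ℝ) + 10))
    have hsq : 2 * Real.log (Real.pi^2 / (6*δ)) + 2 * Real.log ((j:ℝ) + 10)
        ≤ (Real.sqrt (2 * Real.log (Real.pi^2 / (6*δ)))
            + Real.sqrt (2 * Real.log ((j:ℝ) + 10)))^2 := by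
      rw [add_sq]
      rw [Real.sq_sqrt (by linarith), Real.sq_sqrt (by linarith)]
      nlinarith [mul_nonneg ha hb]
    calc Real.sqrt (2 * Real.log (Real.pi^2 / (6*δ)) + 2 * Real.log ((j:ℝ) + 10))
        ≤ Real.sqrt ((Real.sqrt (2 * Real.log (Real.pi^2 / (6*δ)))
            + Real.sqrt (2 * Real.log ((j:ℝ) + 10)))^2) := Real.sqrt_le_sqrt hsq
    _ = _ := Real.sqrt_sq (by linarith)
  -- assemble
  unfold Sfun
  push_cast
  rw [show Real.logb 2 ((2:ℝ)^j) = (j:ℝ) by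
    rw [Real.logb_pow, Real.logb_self_eq_one (by norm_num)]; ring]
  have h2j : (0:ℝ) < Real.sqrt ((2:ℝ)^j) := Real.sqrt_pos.mpr (by positivity)
  rw [Real.sqrt_div hlog1, Real.sqrt_div (by linarith : (0:ℝ) ≤ 2 * Real.log ((j:ℝ) + 10))]
  have hmul : C2 * (Real.sqrt (Real.log (1 / dlt δ j)) / Real.sqrt ((2:ℝ)^j))
      ≤ C2 * ((Real.sqrt (2 * Real.log (Real.pi^2 / (6*δ)))
        + Real.sqrt (2 * Real.log ((j:ℝ) + 10))) / Real.sqrt ((2:ℝ)^j)) := by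
    apply mul_le_mul_of_nonneg_left _ hC2
    gcongr
  calc C1 / Real.sqrt ((2:ℝ)^j)
        + C2 * (Real.sqrt (Real.log (1 / dlt δ j)) / Real.sqrt ((2:ℝ)^j))
      ≤ C1 / Real.sqrt ((2:ℝ)^j)
        + C2 * ((Real.sqrt (2 * Real.log (Real.pi^2 / (6*δ)))
          + Real.sqrt (2 * Real.log ((j:ℝ) + 10))) / Real.sqrt ((2:ℝ)^j)) := by linarith
  _ = (C1 + C2 * Real.sqrt (2 * Real.log (Real.pi ^ 2 / (6 * δ)))) / Real.sqrt ((2:ℝ)^j)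
        + C2 * (Real.sqrt (2 * Real.log ((j:ℝ) + 10)) / Real.sqrt ((2:ℝ)^j)) := by
      field_simp
      ring


section Det

variable {Ω : Type*} [MeasurableSpace Ω] {d T : ℕ}
variable {P : ℕ → Measure (EuclideanSpace ℝ (Fin d) × ℝ)}
variable {Zs : ℕ → Ω → EuclideanSpace ℝ (Fin d) × ℝ}

lemma bddAbove_of_le {α : Type*} (f : α → ℝ) (M : ℝ) (h : ∀ a, f a ≤ M) :
    BddAbove (Set.range f) := ⟨M, by rintro y ⟨a, rfl⟩; exact h a⟩

/-- uniform pointwise bound on empirical averages -/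
noncomputable def Eb (Zs : ℕ → Ω → EuclideanSpace ℝ (Fin d) × ℝ) (T : ℕ) (ω : Ω) : ℝ :=
  ∑ t ∈ Finset.Icc 0 T, (|(Zs t ω).2| + ‖(Zs t ω).1‖)^2

lemma Eb_nonneg (ω : Ω) : 0 ≤ Eb Zs T ω :=
  Finset.sum_nonneg fun t _ => by positivity

lemma abs_sqLoss_le_Eb_term (w : W d) (z : EuclideanSpace ℝ (Fin d) × ℝ) :
    |FR d w z| ≤ (|z.2| + ‖z.1‖)^2 := by
  have h1 : |⟪z.1, w.1⟫| ≤ ‖z.1‖ := by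
    calc |⟪z.1, w.1⟫| ≤ ‖z.1‖ * ‖w.1‖ := abs_inner_le z.1 w.1
    _ ≤ ‖z.1‖ * 1 := mul_le_mul_of_nonneg_left w.2 (norm_nonneg _)
    _ = ‖z.1‖ := mul_one _
  have h2 : |z.2 - ⟪z.1, w.1⟫| ≤ |z.2| + ‖z.1‖ :=
    (abs_sub _ _).trans (by linarith)
  show |(z.2 - ⟪z.1, w.1⟫)^2| ≤ _
  rw [abs_of_nonneg (sq_nonneg _)]
  nlinarith [abs_nonneg (z.2 - ⟪z.1, w.1⟫), sq_abs (z.2 - ⟪z.1, w.1⟫),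
    abs_nonneg z.2, norm_nonneg z.1]

lemma abs_empAvg_le {r : ℕ} (hr : 1 ≤ r) (w : W d) (ω : Ω) :
    |empAvg Zs T r (FR d w) ω| ≤ Eb Zs T ω := by
  unfold empAvg
  have hrinv : (0:ℝ) ≤ (r:ℝ)⁻¹ := by positivity
  have hrinv1 : (r:ℝ)⁻¹ ≤ 1 := by
    rw [inv_le_one_iff₀]; right; exact_mod_cast hr
  calc |(r:ℝ)⁻¹ * ∑ t ∈ Finset.Icc (T - r + 1) T, FR d w (Zs t ω)|
      = (r:ℝ)⁻¹ * |∑ t ∈ Finset.Icc (T - r + 1) T, FR d w (Zs t ω)| := by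
        rw [abs_mul, abs_of_nonneg hrinv]
  _ ≤ 1 * |∑ t ∈ Finset.Icc (T - r + 1) T, FR d w (Zs t ω)| :=
        mul_le_mul_of_nonneg_right hrinv1 (abs_nonneg _)
  _ = |∑ t ∈ Finset.Icc (T - r + 1) T, FR d w (Zs t ω)| := one_mul _
  _ ≤ ∑ t ∈ Finset.Icc (T - r + 1) T, |FR d w (Zs t ω)| := Finset.abs_sum_le_sum_abs _ _
  _ ≤ ∑ t ∈ Finset.Icc (T - r + 1) T, (|(Zs t ω).2| + ‖(Zs t ω).1‖)^2 :=
        Finset.sum_le_sum fun t _ => abs_sqLoss_le_Eb_term w (Zs t ω)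
  _ ≤ Eb Zs T ω := by
        apply Finset.sum_le_sum_of_subset_of_nonneg
        · apply Finset.Icc_subset_Icc (Nat.zero_le _) le_rfl
        · intro t _ _; positivity

lemma abs_int_PT_le (hT : 1 ≤ T) (hP : ∀ t, IsProbabilityMeasure (P t))
    (hPsupp : ∀ t ∈ Finset.Icc 1 T, P t (K d)ᶜ = 0) (w : W d) :
    |∫ z, FR d w z ∂(P T)| ≤ 4 := by
  have := hP T
  exact abs_integral_sqLoss_le (hPsupp T (Finset.mem_Icc.mpr ⟨hT, le_rfl⟩)) w

/-- `maxDrift` is monotone in the window length -/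
lemma maxDrift_nonneg (r : ℕ) : 0 ≤ maxDrift (FR d) P T r := by
  unfold maxDrift
  apply Real.iSup_nonneg
  intro t
  exact Real.iSup_nonneg fun w => abs_nonneg _

lemma maxDrift_mono {r1 r2 : ℕ} (h : r1 ≤ r2) :
    maxDrift (FR d) P T r1 ≤ maxDrift (FR d) P T r2 := by
  rcases Nat.eq_zero_or_pos r1 with h0 | hpos
  · subst h0
    have : maxDrift (FR d) P T 0 = 0 := by
      unfold maxDrift
      exact Real.iSup_of_isEmpty _
    rw [this]
    exact maxDrift_nonneg r2
  · have : Nonempty (Fin r1) := ⟨⟨0, hpos⟩⟩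
    apply ciSup_le
    intro t
    exact le_ciSup (f := fun s : Fin r2 => dF (FR d) (P T) (P (T - (s:ℕ))))
      (Set.finite_range _).bddAbove (⟨t.1, lt_of_lt_of_le t.2 h⟩ : Fin r2)

/-- per-index drift bound: population risks under `P T` and `P t` differ by at most
`maxDrift` for `t` in the window. -/
lemma abs_int_sub_int_le_maxDrift (hT : 1 ≤ T) (hP : ∀ t, IsProbabilityMeasure (P t))
    (hPsupp : ∀ t ∈ Finset.Icc 1 T, P t (K d)ᶜ = 0)
    {r t : ℕ} (hr1 : 1 ≤ r) (hrT : r ≤ T) (ht : t ∈ Finset.Icc (T - r + 1) T) (w : W d) :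
    |(∫ z, FR d w z ∂(P T)) - ∫ z, FR d w z ∂(P t)| ≤ maxDrift (FR d) P T r := by
  rw [Finset.mem_Icc] at ht
  have htT : t ≤ T := ht.2
  have htr : T - t < r := by omega
  have hbdd : BddAbove (Set.range fun w : W d =>
      |(∫ z, FR d w z ∂(P T)) - ∫ z, FR d w z ∂(P t)|) := by
    apply bddAbove_of_le _ 8
    intro w'
    have h1 := abs_int_PT_le hT hP hPsupp w'
    have h2 : |∫ z, FR d w' z ∂(P t)| ≤ 4 := by
      have := hP t
      exact abs_integral_sqLoss_le (hPsupp t (Finset.mem_Icc.mpr ⟨by omega, htT⟩)) w'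
    calc |(∫ z, FR d w' z ∂(P T)) - ∫ z, FR d w' z ∂(P t)|
        ≤ |∫ z, FR d w' z ∂(P T)| + |∫ z, FR d w' z ∂(P t)| := abs_sub _ _
    _ ≤ 8 := by linarith
  have step1 : |(∫ z, FR d w z ∂(P T)) - ∫ z, FR d w z ∂(P t)|
      ≤ dF (FR d) (P T) (P t) := le_ciSup hbdd w
  refine step1.trans ?_
  unfold maxDrift
  have : Nonempty (Fin r) := ⟨⟨0, hr1⟩⟩
  have heq : P (T - (((⟨T - t, htr⟩ : Fin r) : ℕ))) = P t := by
    congr 1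
    show T - (T - t) = t
    omega
  calc dF (FR d) (P T) (P t) = dF (FR d) (P T) (P (T - ((⟨T - t, htr⟩ : Fin r) : ℕ))) := by
        rw [heq]
  _ ≤ ⨆ s : Fin r, dF (FR d) (P T) (P (T - (s : ℕ))) :=
        le_ciSup (f := fun s : Fin r => dF (FR d) (P T) (P (T - (s:ℕ))))
          (Set.finite_range _).bddAbove _

/-- population risk against the window-average measure is within `maxDrift` of `P T` risk -/
lemma abs_int_PT_sub_avg_le (hT : 1 ≤ T) (hP : ∀ t, IsProbabilityMeasure (P t))
    (hPsupp : ∀ t ∈ Finset.Icc 1 T, P t (K d)ᶜ = 0)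
    {r : ℕ} (hr1 : 1 ≤ r) (hrT : r ≤ T) (w : W d) :
    |(∫ z, FR d w z ∂(P T)) - ∫ z, FR d w z ∂(avgMeas P T r)|
      ≤ maxDrift (FR d) P T r := by
  have hint : ∫ z, FR d w z ∂(avgMeas P T r)
      = (r:ℝ)⁻¹ * ∑ t ∈ Finset.Icc (T - r + 1) T, ∫ z, FR d w z ∂(P t) :=
    integral_avgMeas hPsupp hP hr1 hrT w
  have hcard : (Finset.Icc (T - r + 1) T).card = r := by rw [Nat.card_Icc]; omega
  have hrne : ((r:ℝ)) ≠ 0 := by positivity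
  have hPT : (∫ z, FR d w z ∂(P T))
      = (r:ℝ)⁻¹ * ∑ _t ∈ Finset.Icc (T - r + 1) T, ∫ z, FR d w z ∂(P T) := by
    rw [Finset.sum_const, hcard, nsmul_eq_mul]
    field_simp
  rw [hint, hPT, ← mul_sub, ← Finset.sum_sub_distrib, abs_mul,
    abs_of_nonneg (by positivity : (0:ℝ) ≤ (r:ℝ)⁻¹)]
  calc (r:ℝ)⁻¹ * |∑ t ∈ Finset.Icc (T - r + 1) T,
        ((∫ z, FR d w z ∂(P T)) - ∫ z, FR d w z ∂(P t))|
      ≤ (r:ℝ)⁻¹ * ∑ t ∈ Finset.Icc (T - r + 1) T,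
        |(∫ z, FR d w z ∂(P T)) - ∫ z, FR d w z ∂(P t)| :=
        mul_le_mul_of_nonneg_left (Finset.abs_sum_le_sum_abs _ _) (by positivity)
  _ ≤ (r:ℝ)⁻¹ * ∑ _t ∈ Finset.Icc (T - r + 1) T, maxDrift (FR d) P T r :=
        mul_le_mul_of_nonneg_left
          (Finset.sum_le_sum fun t ht =>
            abs_int_sub_int_le_maxDrift hT hP hPsupp hr1 hrT ht w) (by positivity)
  _ = maxDrift (FR d) P T r := by
        rw [Finset.sum_const, hcard, nsmul_eq_mul]
        field_simp

end Det


section Det2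

variable {Ω : Type*} [MeasurableSpace Ω] {d T : ℕ}
variable {P : ℕ → Measure (EuclideanSpace ℝ (Fin d) × ℝ)}
variable {Zs : ℕ → Ω → EuclideanSpace ℝ (Fin d) × ℝ}

/-- `BddAbove` for the `dPE (P T)` family -/
lemma bdd_dPE_PT (hT : 1 ≤ T) (hP : ∀ t, IsProbabilityMeasure (P t))
    (hPsupp : ∀ t ∈ Finset.Icc 1 T, P t (K d)ᶜ = 0) {r : ℕ} (hr : 1 ≤ r) (ω : Ω) :
    BddAbove (Set.range fun w : W d =>
      |(∫ z, FR d w z ∂(P T)) - empAvg Zs T r (FR d w) ω|) := by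
  apply bddAbove_of_le _ (4 + Eb Zs T ω)
  intro w
  calc |(∫ z, FR d w z ∂(P T)) - empAvg Zs T r (FR d w) ω|
      ≤ |∫ z, FR d w z ∂(P T)| + |empAvg Zs T r (FR d w) ω| := abs_sub _ _
  _ ≤ 4 + Eb Zs T ω := add_le_add (abs_int_PT_le hT hP hPsupp w) (abs_empAvg_le hr w ω)

lemma bdd_dEE {r s : ℕ} (hr : 1 ≤ r) (hs : 1 ≤ s) (ω : Ω) :
    BddAbove (Set.range fun w : W d =>
      |empAvg Zs T r (FR d w) ω - empAvg Zs T s (FR d w) ω|) := by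
  apply bddAbove_of_le _ (Eb Zs T ω + Eb Zs T ω)
  intro w
  calc |empAvg Zs T r (FR d w) ω - empAvg Zs T s (FR d w) ω|
      ≤ |empAvg Zs T r (FR d w) ω| + |empAvg Zs T s (FR d w) ω| := abs_sub _ _
  _ ≤ _ := add_le_add (abs_empAvg_le hr w ω) (abs_empAvg_le hs w ω)

/-- step 1: on the good event, the distance of `Q_T^r` to `P T` is controlled. -/
lemma dPE_PT_le (hT : 1 ≤ T) (hP : ∀ t, IsProbabilityMeasure (P t))
    (hPsupp : ∀ t ∈ Finset.Icc 1 T, P t (K d)ᶜ = 0)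
    {r : ℕ} (hr1 : 1 ≤ r) (hrT : r ≤ T) (ω : Ω) {s : ℝ}
    (hE : dPE (FR d) (avgMeas P T r) Zs T r ω ≤ s) :
    dPE (FR d) (P T) Zs T r ω ≤ s + maxDrift (FR d) P T r := by
  have hprob : IsProbabilityMeasure (avgMeas P T r) := avgMeas_prob hP hr1 hrT
  have hnull : (avgMeas P T r) (K d)ᶜ = 0 := avgMeas_K_null hPsupp hr1 hrT
  have hbddavg : BddAbove (Set.range fun w : W d =>
      |(∫ z, FR d w z ∂(avgMeas P T r)) - empAvg Zs T r (FR d w) ω|) := by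
    apply bddAbove_of_le _ (4 + Eb Zs T ω)
    intro w
    calc |(∫ z, FR d w z ∂(avgMeas P T r)) - empAvg Zs T r (FR d w) ω|
        ≤ |∫ z, FR d w z ∂(avgMeas P T r)| + |empAvg Zs T r (FR d w) ω| := abs_sub _ _
    _ ≤ 4 + Eb Zs T ω :=
        add_le_add (abs_integral_sqLoss_le hnull w) (abs_empAvg_le hr1 w ω)
  apply ciSup_le
  intro w
  calc |(∫ z, FR d w z ∂(P T)) - empAvg Zs T r (FR d w) ω|
      ≤ |(∫ z, FR d w z ∂(P T)) - ∫ z, FR d w z ∂(avgMeas P T r)|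
        + |(∫ z, FR d w z ∂(avgMeas P T r)) - empAvg Zs T r (FR d w) ω| := abs_sub_le _ _ _
  _ ≤ maxDrift (FR d) P T r + dPE (FR d) (avgMeas P T r) Zs T r ω :=
      add_le_add (abs_int_PT_sub_avg_le hT hP hPsupp hr1 hrT w) (le_ciSup hbddavg w)
  _ ≤ s + maxDrift (FR d) P T r := by linarith
  
/-- `dEE` is controlled by the two `dPE`s. -/
lemma dEE_le_add (hT : 1 ≤ T) (hP : ∀ t, IsProbabilityMeasure (P t))
    (hPsupp : ∀ t ∈ Finset.Icc 1 T, P t (K d)ᶜ = 0)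
    {r s : ℕ} (hr : 1 ≤ r) (hs : 1 ≤ s) (ω : Ω) :
    dEE (FR d) Zs T r s ω
      ≤ dPE (FR d) (P T) Zs T r ω + dPE (FR d) (P T) Zs T s ω := by
  apply ciSup_le
  intro w
  calc |empAvg Zs T r (FR d w) ω - empAvg Zs T s (FR d w) ω|
      ≤ |empAvg Zs T r (FR d w) ω - ∫ z, FR d w z ∂(P T)|
        + |(∫ z, FR d w z ∂(P T)) - empAvg Zs T s (FR d w) ω| := abs_sub_le _ _ _
  _ ≤ dPE (FR d) (P T) Zs T r ω + dPE (FR d) (P T) Zs T s ω := by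
      apply add_le_add
      · rw [abs_sub_comm]
        exact le_ciSup (bdd_dPE_PT hT hP hPsupp hr ω) w
      · exact le_ciSup (bdd_dPE_PT hT hP hPsupp hs ω) w

/-- triangle: `dPE` at scale `s` via scale `r`. -/
lemma dPE_le_dPE_add_dEE (hT : 1 ≤ T) (hP : ∀ t, IsProbabilityMeasure (P t))
    (hPsupp : ∀ t ∈ Finset.Icc 1 T, P t (K d)ᶜ = 0)
    {r s : ℕ} (hr : 1 ≤ r) (hs : 1 ≤ s) (ω : Ω) :
    dPE (FR d) (P T) Zs T s ω
      ≤ dPE (FR d) (P T) Zs T r ω + dEE (FR d) Zs T r s ω := by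
  apply ciSup_le
  intro w
  calc |(∫ z, FR d w z ∂(P T)) - empAvg Zs T s (FR d w) ω|
      ≤ |(∫ z, FR d w z ∂(P T)) - empAvg Zs T r (FR d w) ω|
        + |empAvg Zs T r (FR d w) ω - empAvg Zs T s (FR d w) ω| := abs_sub_le _ _ _
  _ ≤ _ := add_le_add (le_ciSup (bdd_dPE_PT hT hP hPsupp hr ω) w)
        (le_ciSup (bdd_dEE hr hs ω) w)

/-- telescoping bound for `dEE` across dyadic scales -/
lemma dEE_telescope (hT : 1 ≤ T) {a b : ℕ} (hab : a ≤ b) (ω : Ω) :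
    dEE (FR d) Zs T (2^a) (2^b) ω
      ≤ ∑ j ∈ Finset.Ico a b, dEE (FR d) Zs T (2^j) (2^(j+1)) ω := by
  apply ciSup_le
  intro w
  have habs : ∀ b', a ≤ b' → |empAvg Zs T (2^a) (FR d w) ω - empAvg Zs T (2^b') (FR d w) ω|
      ≤ ∑ j ∈ Finset.Ico a b', |empAvg Zs T (2^j) (FR d w) ω
          - empAvg Zs T (2^(j+1)) (FR d w) ω| := by
    intro b'
    induction b' with
    | zero => intro h; interval_cases a; simp
    | succ n ih =>
      intro h
      rcases Nat.lt_or_ge a (n+1) with hlt | hge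
      · have han : a ≤ n := by omega
        rw [Finset.sum_Ico_succ_top han]
        calc |empAvg Zs T (2^a) (FR d w) ω - empAvg Zs T (2^(n+1)) (FR d w) ω|
            ≤ |empAvg Zs T (2^a) (FR d w) ω - empAvg Zs T (2^n) (FR d w) ω|
              + |empAvg Zs T (2^n) (FR d w) ω - empAvg Zs T (2^(n+1)) (FR d w) ω| :=
              abs_sub_le _ _ _
        _ ≤ _ := add_le_add (ih han) le_rfl
      · have : a = n + 1 := by omega
        subst this
        simp
  calc |empAvg Zs T (2^a) (FR d w) ω - empAvg Zs T (2^b) (FR d w) ω|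
      ≤ ∑ j ∈ Finset.Ico a b, |empAvg Zs T (2^j) (FR d w) ω
          - empAvg Zs T (2^(j+1)) (FR d w) ω| := habs b hab
  _ ≤ ∑ j ∈ Finset.Ico a b, dEE (FR d) Zs T (2^j) (2^(j+1)) ω := by
      apply Finset.sum_le_sum
      intro j _
      exact le_ciSup (bdd_dEE (Nat.one_le_two_pow) (Nat.one_le_two_pow) ω) w

/-- excess risk of the ERM over window `r` is at most twice the discrepancy. -/
lemma excess_le_two_dPE (hT : 1 ≤ T) (hP : ∀ t, IsProbabilityMeasure (P t))
    (hPsupp : ∀ t ∈ Finset.Icc 1 T, P t (K d)ᶜ = 0)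
    {r : ℕ} (hr : 1 ≤ r) (ω : Ω) {wh wstar : W d}
    (hERM : ∀ w' : W d, empAvg Zs T r (FR d wh) ω ≤ empAvg Zs T r (FR d w') ω) :
    (∫ z, FR d wh z ∂(P T)) - (∫ z, FR d wstar z ∂(P T))
      ≤ 2 * dPE (FR d) (P T) Zs T r ω := by
  have h1 : (∫ z, FR d wh z ∂(P T)) - empAvg Zs T r (FR d wh) ω
      ≤ dPE (FR d) (P T) Zs T r ω :=
    (le_abs_self _).trans (le_ciSup (bdd_dPE_PT hT hP hPsupp hr ω) wh)
  have h2' : |empAvg Zs T r (FR d wstar) ω - (∫ z, FR d wstar z ∂(P T))|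
      ≤ dPE (FR d) (P T) Zs T r ω := by
    rw [abs_sub_comm]
    exact le_ciSup (bdd_dPE_PT (Zs := Zs) hT hP hPsupp hr ω) wstar
  have h2 : empAvg Zs T r (FR d wstar) ω - (∫ z, FR d wstar z ∂(P T))
      ≤ dPE (FR d) (P T) Zs T r ω := (le_abs_self _).trans h2'
  have h3 := hERM wstar
  linarith

end Det2


section Main

variable {Ω : Type*} [MeasurableSpace Ω] {d T : ℕ}
variable {P : ℕ → Measure (EuclideanSpace ℝ (Fin d) × ℝ)}
variable {Zs : ℕ → Ω → EuclideanSpace ℝ (Fin d) × ℝ}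

lemma deterministic (hT : 1 ≤ T)
    (hP : ∀ t, IsProbabilityMeasure (P t))
    (hPsupp : ∀ t ∈ Finset.Icc 1 T, P t (K d)ᶜ = 0)
    {C1 C2 δ : ℝ} (hC1 : 0 ≤ C1) (hC2 : 0 ≤ C2)
    (ω : Ω)
    (hGood : ∀ j : ℕ, 2^j ≤ T →
      dPE (FR d) (avgMeas P T (2^j)) Zs T (2^j) ω ≤ Sfun C1 C2 ((2^j : ℕ) : ℝ) δ)
    {jh : ℕ} (hstop : stopCond (FR d) Zs T C1 C2 δ jh ω)
    (hmin : ∀ j < jh, ¬ stopCond (FR d) Zs T C1 C2 δ j ω)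
    {wh : W d} (hERM : ∀ w' : W d,
      empAvg Zs T (2^jh) (FR d wh) ω ≤ empAvg Zs T (2^jh) (FR d w') ω)
    (wstar : W d)
    (r : ℕ) (hr1 : 1 ≤ r) (hrT : r ≤ T) :
    (∫ z, FR d wh z ∂(P T)) - (∫ z, FR d wstar z ∂(P T))
      ≤ 44 * (21 * Sfun C1 C2 (r:ℝ) δ + maxDrift (FR d) P T r) := by
  have hΔ0 : 0 ≤ maxDrift (FR d) P T r := maxDrift_nonneg r
  have hS0 : 0 ≤ Sfun C1 C2 (r:ℝ) δ := Sfun_nonneg C1 C2 δ hC1 hC2 (r:ℝ)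
  have hexc := excess_le_two_dPE (Zs := Zs) hT hP hPsupp
    (Nat.one_le_two_pow (n := jh)) ω (wstar := wstar) hERM
  suffices hD : dPE (FR d) (P T) Zs T (2^jh) ω
      ≤ 98 * Sfun C1 C2 (r:ℝ) δ + 3 * maxDrift (FR d) P T r by
    nlinarith
  set jr := Nat.log 2 r with hjrdef
  have hjr1 : 2^jr ≤ r := Nat.pow_log_le_self 2 (by omega)
  have hjr2 : r < 2^(jr+1) := Nat.lt_pow_succ_log_self (by norm_num) r
  have hno : ∀ j < jh, 2^(j+1) ≤ T ∧
      dEE (FR d) Zs T (2^j) (2^(j+1)) ω ≤ 4 * Sfun C1 C2 ((2^j:ℕ):ℝ) δ := by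
    intro j hj
    have hns := hmin j hj
    unfold stopCond at hns
    push_neg at hns
    exact ⟨hns.1, hns.2⟩
  have h2jhT : 2^jh ≤ T := by
    rcases Nat.eq_zero_or_pos jh with h0 | hpos
    · subst h0; simpa using hT
    · have := (hno (jh-1) (by omega)).1
      have heq : jh - 1 + 1 = jh := by omega
      rwa [heq] at this
  have hdPT : ∀ j : ℕ, 2^j ≤ T → dPE (FR d) (P T) Zs T (2^j) ω
      ≤ Sfun C1 C2 ((2^j:ℕ):ℝ) δ + maxDrift (FR d) P T (2^j) :=
    fun j hj => dPE_PT_le hT hP hPsupp Nat.one_le_two_pow hj ω (hGood j hj)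
  have hScomp : Sfun C1 C2 ((2^jr:ℕ):ℝ) δ ≤ 2 * Sfun C1 C2 (r:ℝ) δ :=
    Sfun_pow_le_two_Sfun C1 C2 δ hC1 hC2 jr r hjr1 (le_of_lt hjr2)
  rcases lt_trichotomy jh jr with hlt | heqc | hgt
  · -- stopped early: drift dominates
    have h1 : 2^(jh+1) ≤ 2^jr := Nat.pow_le_pow_right (by norm_num) (by omega)
    have h2r : 2^(jh+1) ≤ r := le_trans h1 hjr1
    have h2T : 2^(jh+1) ≤ T := le_trans h2r hrT
    have hjhr : 2^jh ≤ r :=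
      le_trans (Nat.pow_le_pow_right (by norm_num) (Nat.le_succ _)) h2r
    have hstop' : dEE (FR d) Zs T (2^jh) (2^(jh+1)) ω
        > 4 * Sfun C1 C2 ((2^jh:ℕ):ℝ) δ := by
      rcases hstop with hA | hB
      · exact absurd hA (not_lt.mpr h2T)
      · exact hB
    have hd1 := hdPT jh (le_trans hjhr hrT)
    have hd2 := hdPT (jh+1) h2T
    have hdee := dEE_le_add (Zs := Zs) hT hP hPsupp
      (Nat.one_le_two_pow (n := jh)) (Nat.one_le_two_pow (n := jh+1)) ω
    have hS2 : Sfun C1 C2 ((2^(jh+1):ℕ):ℝ) δ ≤ 2 * Sfun C1 C2 ((2^jh:ℕ):ℝ) δ := by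
      rw [Sfun_pow_eq, Sfun_pow_eq]
      have hg := SS_le_geom C1 C2 δ hC1 hC2 jh 1
      have hq1 := q_lt_one
      have hq0 := q_nonneg
      have hSS0 := SS_nonneg C1 C2 δ hC1 hC2 jh
      have : SS C1 C2 δ (jh + 1) ≤ 2 * (Real.sqrt 2)⁻¹ * SS C1 C2 δ jh := by
        have := hg
        push_cast at this
        rw [pow_one] at this
        linarith
      nlinarith
    have hΔ1 : maxDrift (FR d) P T (2^jh) ≤ maxDrift (FR d) P T r := maxDrift_mono hjhr
    have hΔ2 : maxDrift (FR d) P T (2^(jh+1)) ≤ maxDrift (FR d) P T r := maxDrift_mono h2r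
    have hSjh0 : 0 ≤ Sfun C1 C2 ((2^jh:ℕ):ℝ) δ := Sfun_nonneg C1 C2 δ hC1 hC2 _
    linarith
  · -- stopped exactly at the dyadic scale of r
    have h2T : 2^jh ≤ T := by rw [heqc]; exact le_trans hjr1 hrT
    have hd := hdPT jh h2T
    have hΔ1 : maxDrift (FR d) P T (2^jh) ≤ maxDrift (FR d) P T r := by
      rw [heqc]; exact maxDrift_mono hjr1
    have hSc : Sfun C1 C2 ((2^jh:ℕ):ℝ) δ ≤ 2 * Sfun C1 C2 (r:ℝ) δ := by
      rw [heqc]; exact hScomp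
    linarith
  · -- stopped late: telescoping over no-stop scales
    have hd := dPE_le_dPE_add_dEE (Zs := Zs) hT hP hPsupp
      (Nat.one_le_two_pow (n := jr)) (Nat.one_le_two_pow (n := jh)) ω
    have htel := dEE_telescope (Zs := Zs) hT (le_of_lt hgt) ω
    have hsum : ∑ j ∈ Finset.Ico jr jh, dEE (FR d) Zs T (2^j) (2^(j+1)) ω
        ≤ ∑ j ∈ Finset.Ico jr jh, 4 * Sfun C1 C2 ((2^j:ℕ):ℝ) δ :=
      Finset.sum_le_sum fun j hj => (hno j (Finset.mem_Ico.mp hj).2).2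
    have hq0 := q_nonneg
    have hSSjr0 := SS_nonneg C1 C2 δ hC1 hC2 jr
    have hsum2 : ∑ j ∈ Finset.Ico jr jh, 4 * Sfun C1 C2 ((2^j:ℕ):ℝ) δ
        ≤ 48 * Sfun C1 C2 ((2^jr:ℕ):ℝ) δ := by
      rw [Finset.sum_Ico_eq_sum_range]
      calc ∑ k ∈ Finset.range (jh - jr), 4 * Sfun C1 C2 ((2^(jr+k):ℕ):ℝ) δ
          = ∑ k ∈ Finset.range (jh - jr), 4 * SS C1 C2 δ (jr + k) := by
            apply Finset.sum_congr rfl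
            intro k _
            rw [Sfun_pow_eq]
      _ ≤ ∑ k ∈ Finset.range (jh - jr),
            4 * (((k:ℝ)+1) * ((Real.sqrt 2)⁻¹)^k * SS C1 C2 δ jr) := by
            apply Finset.sum_le_sum
            intro k _
            have := SS_le_geom C1 C2 δ hC1 hC2 jr k
            linarith
      _ = 4 * SS C1 C2 δ jr * ∑ k ∈ Finset.range (jh - jr),
            ((k:ℝ)+1) * ((Real.sqrt 2)⁻¹)^k := by
            rw [Finset.mul_sum]
            apply Finset.sum_congr rfl
            intro k _
            ring
      _ ≤ 4 * SS C1 C2 δ jr * 12 := by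
            apply mul_le_mul_of_nonneg_left (sum_geom_le _) (by positivity)
      _ = 48 * SS C1 C2 δ jr := by ring
      _ = 48 * Sfun C1 C2 ((2^jr:ℕ):ℝ) δ := by rw [Sfun_pow_eq]
    have hdjr := hdPT jr (le_trans hjr1 hrT)
    have hΔ1 : maxDrift (FR d) P T (2^jr) ≤ maxDrift (FR d) P T r := maxDrift_mono hjr1
    linarith

end Main

end St11

open St11 in
/-- adaptive linear regression with squared loss under drift.
With probability at least `1 − δ`, the empirical risk minimizer `ŵ` over the
adaptively chosen window `r̂ = 2^ĵ` satisfies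
`P_T(L_ŵ) − P_T(L_w*) ≤ 44·min_{1 ≤ r ≤ T}(21·S(r,δ) + max_{0 ≤ t ≤ r−1}‖P_T − P_{T−t}‖_F)`. -/
theorem stmt11 {Ω : Type*} [MeasurableSpace Ω] (d : ℕ)
    (μ : Measure Ω) [IsProbabilityMeasure μ]
    (T : ℕ) (hT : 1 ≤ T) (P : ℕ → Measure (EuclideanSpace ℝ (Fin d) × ℝ))
    (hP : ∀ t, IsProbabilityMeasure (P t))
    (hPsupp : ∀ t ∈ Finset.Icc 1 T,
      P t {z : EuclideanSpace ℝ (Fin d) × ℝ | ‖z.1‖ ≤ 1 ∧ |z.2| ≤ 1}ᶜ = 0)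
    (Zs : ℕ → Ω → EuclideanSpace ℝ (Fin d) × ℝ) (hZmeas : ∀ t, Measurable (Zs t))
    (hindep : iIndepFun Zs μ)
    (hdist : ∀ t ∈ Finset.Icc 1 T, μ.map (Zs t) = P t)
    (C1 C2 : ℝ) (hC1 : 0 ≤ C1) (hC2 : 0 ≤ C2)
    (hUC : ∀ r : ℕ, 1 ≤ r → r ≤ T → ∀ δ' : ℝ, 0 < δ' → δ' < 1 →
      ENNReal.ofReal (1 - δ') ≤ μ {ω | dPE (FR d) (avgMeas P T r) Zs T r ω ≤
        C1 / Real.sqrt r + C2 * Real.sqrt (Real.log (1 / δ') / r)})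
    (δ : ℝ) (hδ0 : 0 < δ) (hδ1 : δ < 1)
    (jhat : Ω → ℕ)
    (hjhat : ∀ ω, stopCond (FR d) Zs T C1 C2 δ (jhat ω) ω ∧
      ∀ j < jhat ω, ¬ stopCond (FR d) Zs T C1 C2 δ j ω)
    (what : Ω → {w : EuclideanSpace ℝ (Fin d) // ‖w‖ ≤ 1})
    (hERM : ∀ ω, ∀ w' : {w : EuclideanSpace ℝ (Fin d) // ‖w‖ ≤ 1},
      empAvg Zs T (2 ^ jhat ω) (FR d (what ω)) ω ≤
        empAvg Zs T (2 ^ jhat ω) (FR d w') ω)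
    (wstar : {w : EuclideanSpace ℝ (Fin d) // ‖w‖ ≤ 1})
    (hstarOpt : ∀ w' : {w : EuclideanSpace ℝ (Fin d) // ‖w‖ ≤ 1},
      (∫ z, FR d wstar z ∂(P T)) ≤ ∫ z, FR d w' z ∂(P T)) :
    ENNReal.ofReal (1 - δ) ≤
      μ {ω | (∫ z, FR d (what ω) z ∂(P T)) - (∫ z, FR d wstar z ∂(P T)) ≤
        44 * (Finset.Icc 1 T).inf' (Finset.nonempty_Icc.mpr hT)
          (fun r => 21 * Sfun C1 C2 (r : ℕ) δ + maxDrift (FR d) P T r)} := by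

  classical
  set J := Nat.log 2 T with hJdef
  -- the good events
  set G : ℕ → Set Ω := fun j => {ω | dPE (FR d) (avgMeas P T (2^j)) Zs T (2^j) ω
    ≤ Sfun C1 C2 ((2^j : ℕ) : ℝ) δ} with hGdef
  have hjle : ∀ j : ℕ, j ≤ J → 2^j ≤ T := by
    intro j hj
    calc 2^j ≤ 2^J := Nat.pow_le_pow_right (by norm_num) hj
    _ ≤ T := Nat.pow_log_le_self 2 (by omega)
  have hGmeas : ∀ j : ℕ, j ≤ J → MeasurableSet (G j) := by
    intro j hj
    have h2T := hjle j hj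
    have h21 : 1 ≤ 2^j := Nat.one_le_two_pow
    haveI := avgMeas_prob hP h21 h2T
    have hnull := avgMeas_K_null (d := d) hPsupp h21 h2T
    exact measurableSet_le (measurable_dPE hnull hZmeas) measurable_const
  have hGprob : ∀ j : ℕ, j ≤ J → ENNReal.ofReal (1 - dlt δ j) ≤ μ (G j) := by
    intro j hj
    have h2T := hjle j hj
    have h21 : 1 ≤ 2^j := Nat.one_le_two_pow
    have hd0 := dlt_pos hδ0 j
    have hd1 := dlt_lt_one hδ0 hδ1 j
    refine le_trans (hUC (2^j) h21 h2T (dlt δ j) hd0 hd1) (measure_mono ?_)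
    intro ω hω
    simp only [Set.mem_setOf_eq] at hω ⊢
    exact hω.trans (UC_bound_le_Sfun hC1 hC2 hδ0 hδ1 j)
  set E : Set Ω := ⋂ j ∈ Finset.range (J+1), G j with hEdef
  have hEmeas : MeasurableSet E := by
    apply MeasurableSet.biInter (Finset.range (J+1)).countable_toSet
    intro j hj
    exact hGmeas j (by simpa [Nat.lt_succ_iff] using hj)
  have hEc : μ Eᶜ ≤ ENNReal.ofReal δ := by
    have hcompl : Eᶜ = ⋃ j ∈ Finset.range (J+1), (G j)ᶜ := by
      rw [hEdef, Set.compl_iInter₂]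
    rw [hcompl]
    calc μ (⋃ j ∈ Finset.range (J+1), (G j)ᶜ)
        ≤ ∑ j ∈ Finset.range (J+1), μ (G j)ᶜ := measure_biUnion_finset_le _ _
    _ ≤ ∑ j ∈ Finset.range (J+1), ENNReal.ofReal (dlt δ j) := by
        apply Finset.sum_le_sum
        intro j hj
        have hjJ : j ≤ J := by simpa [Nat.lt_succ_iff] using hj
        have h1 := hGprob j hjJ
        rw [prob_compl_eq_one_sub (hGmeas j hjJ)]
        have heq : ENNReal.ofReal (dlt δ j) = 1 - ENNReal.ofReal (1 - dlt δ j) := by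
          rw [← ENNReal.ofReal_one, ← ENNReal.ofReal_sub _ (by linarith [dlt_lt_one hδ0 hδ1 j, dlt_pos hδ0 j] : (0:ℝ) ≤ 1 - dlt δ j)]
          norm_num
        rw [heq]
        exact tsub_le_tsub_left h1 1
    _ = ENNReal.ofReal (∑ j ∈ Finset.range (J+1), dlt δ j) := by
        rw [ENNReal.ofReal_sum_of_nonneg]
        intro j _
        exact le_of_lt (dlt_pos hδ0 j)
    _ ≤ ENNReal.ofReal δ := ENNReal.ofReal_le_ofReal (sum_dlt_le hδ0 (J+1))
  have hE1 : ENNReal.ofReal (1 - δ) ≤ μ E := by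
    have h1 : μ Eᶜ = 1 - μ E := prob_compl_eq_one_sub hEmeas
    have h2 : μ E = 1 - μ Eᶜ := by
      rw [h1]
      rw [ENNReal.sub_sub_cancel ENNReal.one_ne_top prob_le_one]
    rw [h2]
    calc ENNReal.ofReal (1 - δ) = 1 - ENNReal.ofReal δ := by
          rw [← ENNReal.ofReal_one, ← ENNReal.ofReal_sub _ (le_of_lt hδ0)]
    _ ≤ 1 - μ Eᶜ := tsub_le_tsub_left hEc 1
  refine le_trans hE1 (measure_mono ?_)
  -- the deterministic part: on E the bound holds
  intro ω hω
  simp only [Set.mem_setOf_eq]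
  have hGood : ∀ j : ℕ, 2^j ≤ T →
      dPE (FR d) (avgMeas P T (2^j)) Zs T (2^j) ω ≤ Sfun C1 C2 ((2^j : ℕ) : ℝ) δ := by
    intro j hj
    have hjJ : j ≤ J := Nat.le_log_of_pow_le (by norm_num) hj
    have := Set.mem_iInter₂.mp hω j (Finset.mem_range.mpr (Nat.lt_succ_of_le hjJ))
    exact this
  obtain ⟨r₀, hr₀mem, hr₀eq⟩ := Finset.exists_mem_eq_inf' (Finset.nonempty_Icc.mpr hT)
    (fun r => 21 * Sfun C1 C2 (r : ℕ) δ + maxDrift (FR d) P T r)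
  rw [hr₀eq]
  rw [Finset.mem_Icc] at hr₀mem
  exact deterministic hT hP hPsupp hC1 hC2 ω hGood (hjhat ω).1 (hjhat ω).2
    (hERM ω) wstar r₀ hr₀mem.1 hr₀mem.2
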